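/- arXiv:1409.7337 — 11 statements merged into one kernel-verified Lean document; each statement's English description precedes it below -/
import Mathlib

section
/- Let C be a family of sets and κ an infinite cardinal. If the collection of all unions of subfamilies of C of size < κ is <κ-Noetherian (i.e., every subcollection well-ordered by strict inclusion has size < κ), then every subfamily of C of size ≥ κ contains a κ-sized subfamily C₁ with a subfamily C₀ of size < κ such that ⋃C₀ ⊇ ⋃C₁. -/
universe u

/-- A family of sets is `<κ`-Noetherian if every subfamily well-ordered by
strict inclusion has cardinality `< κ`. -/
def IsLtNoetherian {X : Type u} (C : Set (Set X)) (κ : Cardinal.{u}) : Prop :=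
  ∀ D : Set (Set X), D ⊆ C →
    IsWellOrder D (fun A B => (A : Set X) ⊂ (B : Set X)) → Cardinal.mk D < κ

/-!
If no subfamily of size `< κ` of `C₂` covered `⋃₀ C₂`, we could choose, by transfinite
recursion along `κ`, members `f α ∈ C₂` not covered by the earlier ones. The unions
`⋃₀ (f '' Iio α)` of the `< κ`-sized families of predecessors then form a strictly increasing
`κ`-chain of unions of small subfamilies, which `<κ`-Noetherianity forbids. A covering family
`C₀` of size `< κ` is finally padded inside `C₂` to a family `C₁` of size exactly `κ`.
-/

open Cardinal Set

noncomputable def greedySeq {ι α : Type*} [Preorder ι] [WellFoundedLT ι] (g : Set α → α) :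
    ι → α :=
  WellFoundedLT.fix fun i rec => g (range fun j : Iio i => rec j j.2)

theorem greedySeq_eq {ι α : Type*} [Preorder ι] [WellFoundedLT ι] (g : Set α → α) (i : ι) :
    greedySeq g i = g (greedySeq g '' Iio i) := by
  rw [greedySeq, WellFoundedLT.fix_eq, image_eq_range]

theorem strictMono_sUnion_image_Iio {ι α : Type*} [Preorder ι] {f : ι → Set α}
    (hf : ∀ i, ¬ f i ⊆ ⋃₀ (f '' Iio i)) : StrictMono fun i => ⋃₀ (f '' Iio i) := by
  intro i j hij
  have hle : ⋃₀ (f '' Iio i) ⊆ ⋃₀ (f '' Iio j) :=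
    sUnion_mono (image_mono (Iio_subset_Iio hij.le))
  exact ssubset_of_subset_not_subset hle fun hge =>
    hf i ((subset_sUnion_of_mem (mem_image_of_mem f (mem_Iio.mpr hij))).trans hge)

theorem exists_subset_subset_mk_eq {α : Type u} {S T : Set α} {κ : Cardinal.{u}}
    (hκ : ℵ₀ ≤ κ) (hST : S ⊆ T) (hS : #S ≤ κ) (hT : κ ≤ #T) :
    ∃ U, S ⊆ U ∧ U ⊆ T ∧ #U = κ := by
  obtain ⟨R, hRT, hR⟩ := le_mk_iff_exists_subset.mp hT
  refine ⟨S ∪ R, subset_union_left, union_subset hST hRT, le_antisymm ?_ ?_⟩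
  · calc #(S ∪ R : Set α) ≤ #S + #R := mk_union_le S R
      _ ≤ κ + κ := add_le_add hS hR.le
      _ = κ := add_eq_self hκ
  · exact hR.ge.trans (mk_le_mk_of_subset subset_union_right)

def smallUnions {X : Type u} (C : Set (Set X)) (κ : Cardinal.{u}) : Set (Set X) :=
  {U : Set X | ∃ S : Set (Set X), S ⊆ C ∧ #S < κ ∧ U = ⋃₀ S}

theorem smallUnions_mono {X : Type u} {C D : Set (Set X)} (κ : Cardinal.{u}) (hDC : D ⊆ C) :
    smallUnions D κ ⊆ smallUnions C κ := by
  rintro _ ⟨S, hSD, hS, rfl⟩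
  exact ⟨S, hSD.trans hDC, hS, rfl⟩

namespace IsLtNoetherian

variable {X : Type u} {C : Set (Set X)} {κ : Cardinal.{u}}

theorem mono {D : Set (Set X)} (h : IsLtNoetherian C κ) (hDC : D ⊆ C) : IsLtNoetherian D κ :=
  fun E hED => h E (hED.trans hDC)

theorem pos (h : IsLtNoetherian C κ) : 0 < κ := by
  simpa using h ∅ (empty_subset C) inferInstance

theorem mk_lt_of_strictMono (h : IsLtNoetherian C κ) {ι : Type u} [LinearOrder ι]
    [WellFoundedLT ι] {f : ι → Set X} (hf : StrictMono f) (hfC : ∀ i, f i ∈ C) : #ι < κ := by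
  let iso : ((· < ·) : ι → ι → Prop) ≃r fun A B : range f => (A : Set X) ⊂ B :=
    ⟨Equiv.ofInjective f hf.injective, hf.lt_iff_lt⟩
  rw [← mk_range_eq f hf.injective]
  exact h _ (range_subset_iff.mpr hfC) iso.symm.toRelEmbedding.isWellOrder

theorem exists_sUnion_subset_sUnion (h : IsLtNoetherian (smallUnions C κ) κ) :
    ∃ S ⊆ C, #S < κ ∧ ⋃₀ C ⊆ ⋃₀ S := by
  by_contra! hC
  have hsel : ∀ S : Set (Set X), ∃ A ∈ C, S ⊆ C → #S < κ → ¬ A ⊆ ⋃₀ S := by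
    have hnot (S) (hSC : S ⊆ C) (hS : #S < κ) : ∃ A ∈ C, ¬ A ⊆ ⋃₀ S := by
      simpa [sUnion_subset_iff] using hC S hSC hS
    intro S
    by_cases hS : S ⊆ C ∧ #S < κ
    · obtain ⟨A, hA, hAS⟩ := hnot S hS.1 hS.2
      exact ⟨A, hA, fun _ _ => hAS⟩
    · obtain ⟨A₀, hA₀, -⟩ := hnot ∅ (empty_subset C) (by simpa using h.pos)
      exact ⟨A₀, hA₀, fun hSC hS' => absurd ⟨hSC, hS'⟩ hS⟩
  choose g hgC hg using hsel
  let f : κ.ord.ToType → Set X := greedySeq g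
  have hf (i) : f i = g (f '' Iio i) := greedySeq_eq g i
  have hfC (i) : f i ∈ C := hf i ▸ hgC _
  have hsub (i) : f '' Iio i ⊆ C := image_subset_iff.mpr fun j _ => hfC j
  have hsmall (i) : #(f '' Iio i) < κ :=
    mk_image_le.trans_lt (by simpa using mk_Iio_lt i (by simp))
  have hnew (i) : ¬ f i ⊆ ⋃₀ (f '' Iio i) := hf i ▸ hg _ (hsub i) (hsmall i)
  have hκκ := h.mk_lt_of_strictMono (strictMono_sUnion_image_Iio hnew)
    fun i => ⟨_, hsub i, hsmall i, rfl⟩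
  rw [mk_ord_toType] at hκκ
  exact hκκ.false

end IsLtNoetherian

theorem stmt0 {X : Type u} (C : Set (Set X)) (κ : Cardinal.{u})
    (hκ : Cardinal.aleph0 ≤ κ)
    (h : IsLtNoetherian
      {U : Set X | ∃ S : Set (Set X), S ⊆ C ∧ Cardinal.mk S < κ ∧ U = ⋃₀ S} κ) :
    ∀ C₂ : Set (Set X), C₂ ⊆ C → κ ≤ Cardinal.mk C₂ →
      ∃ C₁ ⊆ C₂, Cardinal.mk C₁ = κ ∧
        ∃ C₀ ⊆ C₁, Cardinal.mk C₀ < κ ∧ ⋃₀ C₁ ⊆ ⋃₀ C₀ := by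
  intro C₂ hC₂C hκC₂
  obtain ⟨C₀, hC₀C₂, hC₀, hcover⟩ :=
    (IsLtNoetherian.mono h (smallUnions_mono κ hC₂C)).exists_sUnion_subset_sUnion
  obtain ⟨C₁, hC₀C₁, hC₁C₂, hC₁⟩ := exists_subset_subset_mk_eq hκ hC₀C₂ hC₀.le hκC₂
  exact ⟨C₁, hC₁C₂, hC₁, C₀, hC₀C₁, hC₀, (sUnion_mono hC₁C₂).trans hcover⟩
end

section
/- Let C be a family of sets and κ an infinite cardinal. C is additively <κ-Noetherian if and only if it is NOT possible to choose, for every ordinal α < κ, a set C_α ∈ C and a point x_α such that for all β < α < κ, the point x_α lies in C_α but not in C_β. -/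
universe u

/-- A family is additively `<κ`-Noetherian if the collection of all unions of
its subfamilies is `<κ`-Noetherian. -/
def IsAddLtNoetherian {X : Type u} (C : Set (Set X)) (κ : Cardinal.{u}) : Prop :=
  IsLtNoetherian {U : Set X | ∃ S : Set (Set X), S ⊆ C ∧ U = ⋃₀ S} κ

/-!
Call `(A α, x α)_{α < κ.ord}` separated when `x α ∈ A α ∈ C` and `x α ∉ A β` for `β < α`.
A separated sequence yields the chain of unions `U α = ⋃ β ≤ α, A β`, which is
strictly increasing because `x α ∈ U α \ U β` for `β < α`; it has length `κ.ord`, hence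
cardinality `κ`. Conversely, a well-ordered family of unions of cardinality `≥ κ` contains a
strictly increasing chain `(U α)_{α < κ.ord}`. As `U α ⊂ U (α + 1)` and `U (α + 1)` is a union of
members of `C`, some member `A α ⊆ U (α + 1)` contains a point `x α ∉ U α`; for `β < α` we have
`A β ⊆ U (β + 1) ⊆ U α`, so the sequence is separated. Infiniteness of `κ` makes `κ.ord` a limit,
so that `α + 1 < κ.ord`.
-/

open Cardinal Order Set

section

variable {X : Type u}

theorem not_isLtNoetherian_of_strictMonoOn {F : Set (Set X)} {κ : Cardinal.{u}}
    {e : Ordinal.{u} → Set X} (he : StrictMonoOn e (Iio κ.ord)) (heF : ∀ α < κ.ord, e α ∈ F) :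
    ¬ IsLtNoetherian F κ := by
  intro hN
  let g : Iio κ.ord → e '' Iio κ.ord := fun α => ⟨e α, mem_image_of_mem e α.2⟩
  have hg : StrictMono g := fun a b h => he a.2 b.2 h
  have hwo : IsWellOrder (e '' Iio κ.ord) (fun A B => (A : Set X) ⊂ B) :=
    (hg.orderIsoOfSurjective g (by rintro ⟨_, α, hα, rfl⟩; exact ⟨⟨α, hα⟩, rfl⟩)).symm
      |>.toRelIsoLT.toRelEmbedding.isWellOrder
  have hcard : #(e '' Iio κ.ord) = κ := by
    rw [← lift_inj.{u, u + 1}, mk_image_eq_of_injOn_lift _ _ he.injOn, mk_Iio_ordinal, card_ord,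
      lift_lift]
  exact (hN _ (image_subset_iff.mpr heF) hwo).ne hcard

theorem exists_strictMonoOn_of_not_isLtNoetherian {F : Set (Set X)} {κ : Cardinal.{u}}
    (h : ¬ IsLtNoetherian F κ) :
    ∃ e : Ordinal.{u} → Set X, StrictMonoOn e (Iio κ.ord) ∧ ∀ α < κ.ord, e α ∈ F := by
  simp only [IsLtNoetherian, not_forall, not_lt] at h
  obtain ⟨D, hDF, hwo, hκD⟩ := h
  set r : D → D → Prop := fun A B => (A : Set X) ⊂ B
  have htype : κ.ord ≤ Ordinal.type r := by rwa [ord_le, Ordinal.card_type]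
  let e : Ordinal.{u} → Set X := fun α =>
    if hα : α < Ordinal.type r then Ordinal.enum r ⟨α, hα⟩ else ∅
  have he : ∀ α (hα : α < κ.ord), e α = Ordinal.enum r ⟨α, hα.trans_le htype⟩ :=
    fun α hα => dif_pos _
  refine ⟨e, fun β hβ α hα hβα => ?_, fun α hα => ?_⟩
  · rw [he β hβ, he α hα]
    exact Ordinal.enum_lt_enum (r := r).mpr (Subtype.mk_lt_mk.mpr hβα)
  · rw [he α hα]
    exact hDF (Subtype.prop _)

theorem strictMonoOn_accumulate {ι : Type*} [Preorder ι] {o : ι} {A : ι → Set X} {x : ι → X}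
    (hAx : ∀ α < o, x α ∈ A α ∧ ∀ β < α, x α ∉ A β) :
    StrictMonoOn (accumulate A) (Iio o) := by
  intro β _ α hα hβα
  refine ssubset_of_subset_not_subset (accumulate_subset_accumulate hβα.le) fun hsub => ?_
  obtain ⟨γ, hγβ, hxγ⟩ := mem_accumulate.mp (hsub (subset_accumulate (hAx α hα).1))
  exact (hAx α hα).2 γ (hγβ.trans_lt hβα) hxγ

theorem accumulate_mem_unions {ι : Type*} [Preorder ι] {C : Set (Set X)} {o : ι}
    {A : ι → Set X} (hA : ∀ α < o, A α ∈ C) {α : ι} (hα : α < o) :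
    ∃ S ⊆ C, accumulate A α = ⋃₀ S :=
  ⟨A '' Iic α, image_subset_iff.mpr fun _ hβ => hA _ (lt_of_le_of_lt hβ hα),
    by rw [sUnion_image, accumulate_def]; rfl⟩

theorem exists_separated_seq_of_strictMonoOn_unions {ι : Type*} [LinearOrder ι] [SuccOrder ι]
    {C : Set (Set X)} {o : ι} (ho : IsSuccLimit o) {e : ι → Set X}
    (he : StrictMonoOn e (Iio o)) (heC : ∀ α < o, ∃ S ⊆ C, e α = ⋃₀ S) :
    ∃ (A : ι → Set X) (x : ι → X), ∀ α < o, A α ∈ C ∧ x α ∈ A α ∧ ∀ β < α, x α ∉ A β := by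
  have hsucc : ∀ α < o, e α ⊂ e (succ α) := fun α hα =>
    he hα (ho.succ_lt hα) (lt_succ_of_not_isMax (not_isMax_of_lt hα))
  have hstep : ∀ α < o, ∃ B ∈ C, B ⊆ e (succ α) ∧ ∃ p ∈ B, p ∉ e α := by
    intro α hα
    obtain ⟨S, hSC, hS⟩ := heC (succ α) (ho.succ_lt hα)
    have : ¬ ⋃₀ S ⊆ e α := hS ▸ (hsucc α hα).not_subset
    obtain ⟨B, hBS, hB⟩ := by simpa only [sUnion_subset_iff, not_forall, exists_prop] using this
    exact ⟨B, hSC hBS, hS ▸ subset_sUnion_of_mem hBS, not_subset.mp hB⟩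
  obtain ⟨α₀, hα₀⟩ := not_isMin_iff.mp ho.not_isMin
  obtain ⟨p₀, -⟩ := exists_of_ssubset (hsucc α₀ hα₀)
  have hchoice : ∀ α, ∃ (B : Set X) (p : X),
      α < o → B ∈ C ∧ B ⊆ e (succ α) ∧ p ∈ B ∧ p ∉ e α := by
    intro α
    by_cases hα : α < o
    · obtain ⟨B, hBC, hBe, p, hpB, hpe⟩ := hstep α hα
      exact ⟨B, p, fun _ => ⟨hBC, hBe, hpB, hpe⟩⟩
    · exact ⟨∅, p₀, fun h => absurd h hα⟩
  choose A x hAx using hchoice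
  refine ⟨A, x, fun α hα => ⟨(hAx α hα).1, (hAx α hα).2.2.1, fun β hβα hxβ => ?_⟩⟩
  have hAβ : A β ⊆ e α := (hAx β (hβα.trans hα)).2.1.trans
    (he.monotoneOn (ho.succ_lt (hβα.trans hα)) hα (succ_le_of_lt hβα))
  exact (hAx α hα).2.2.2 (hAβ hxβ)

end

theorem stmt1 {X : Type u} (C : Set (Set X)) (κ : Cardinal.{u})
    (hκ : Cardinal.aleph0 ≤ κ) :
    IsAddLtNoetherian C κ ↔
      ¬ ∃ (A : Ordinal.{u} → Set X) (x : Ordinal.{u} → X),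
        ∀ α < κ.ord, A α ∈ C ∧ x α ∈ A α ∧ ∀ β < α, x α ∉ A β := by
  constructor
  · rintro hN ⟨A, x, hAx⟩
    exact not_isLtNoetherian_of_strictMonoOn (strictMonoOn_accumulate fun α hα => (hAx α hα).2)
      (fun α hα => accumulate_mem_unions (fun β hβ => (hAx β hβ).1) hα) hN
  · intro hsep
    by_contra hN
    obtain ⟨e, he, heF⟩ := exists_strictMonoOn_of_not_isLtNoetherian hN
    exact hsep (exists_separated_seq_of_strictMonoOn_unions (isSuccLimit_ord hκ) he heF)
end

section
/- Let P be a directed partially ordered set with calibre (κ⁺, κ), and let {C_p : p ∈ P} be a P-ordered collection (i.e., p ≤ q implies C_p ⊆ C_q) of sets, each of size < κ. Then the union ⋃_{p∈P} C_p has size ≤ κ. -/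
universe u

theorem stmt4 {P : Type u} [PartialOrder P] [IsDirected P (· ≤ ·)] {X : Type u}
    (κ : Cardinal.{u}) (hκ : Cardinal.aleph0 ≤ κ)
    (hcal : ∀ A : Set P, Cardinal.mk A = Order.succ κ →
      ∃ A₀ ⊆ A, Cardinal.mk A₀ = κ ∧ BddAbove A₀)
    (C : P → Set X) (hmono : Monotone C)
    (hsize : ∀ p, Cardinal.mk (C p) < κ) :
    Cardinal.mk ↥(⋃ p, C p) ≤ κ := by
  by_contra h
  push_neg at h
  rw [← Order.succ_le_iff] at h
  obtain ⟨S, hS⟩ := Cardinal.le_mk_iff_exists_set.mp h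
  have hchoice : ∀ x : S, ∃ p : P, (x : X) ∈ C p := by
    intro x
    exact Set.mem_iUnion.mp x.1.2
  choose f hf using hchoice
  by_cases hr : Cardinal.mk (Set.range f) ≤ κ
  · -- S injects into the bounded union
    have hinj : Function.Injective (fun x : S =>
        (⟨(x : X), Set.mem_biUnion (Set.mem_range_self x) (hf x)⟩ :
          ↥(⋃ p ∈ Set.range f, C p))) := by
      intro a b hab
      simp only [Subtype.mk.injEq] at hab
      exact Subtype.ext (Subtype.ext hab)
    have h1 : Cardinal.mk S ≤ Cardinal.mk ↥(⋃ p ∈ Set.range f, C p) :=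
      Cardinal.mk_le_of_injective hinj
    have h2 : Cardinal.mk ↥(⋃ p ∈ Set.range f, C p) ≤
        Cardinal.mk (Set.range f) * ⨆ p : Set.range f, Cardinal.mk (C p) :=
      Cardinal.mk_biUnion_le _ _
    have h3 : (⨆ p : Set.range f, Cardinal.mk (C p)) ≤ κ :=
      ciSup_le' fun p => (hsize p).le
    have h4 : Cardinal.mk (Set.range f) * (⨆ p : Set.range f, Cardinal.mk (C p)) ≤ κ * κ :=
      mul_le_mul' hr h3
    rw [Cardinal.mul_eq_self hκ] at h4
    have : Order.succ κ ≤ κ := by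
      calc Order.succ κ = Cardinal.mk S := hS.symm
        _ ≤ κ := h1.trans (h2.trans h4)
    exact absurd this (not_le.mpr (Order.lt_succ κ))
  · push_neg at hr
    rw [← Order.succ_le_iff] at hr
    obtain ⟨A, hAsub, hA⟩ := Cardinal.le_mk_iff_exists_subset.mp hr
    obtain ⟨A₀, hA₀sub, hA₀card, q, hq⟩ := hcal A hA
    have hmem : ∀ a : A₀, ∃ x : S, f x = (a : P) := fun a => hAsub (hA₀sub a.2)
    choose g hg using hmem
    have hginj : Function.Injective (fun a : A₀ =>
        (⟨((g a : S) : X), hmono (hq a.2) (hg a ▸ hf (g a))⟩ : ↥(C q))) := by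
      intro a b hab
      simp only [Subtype.mk.injEq] at hab
      have : g a = g b := Subtype.ext (Subtype.ext hab)
      exact Subtype.ext ((hg a).symm.trans (this ▸ hg b))
    have : κ ≤ Cardinal.mk (C q) := hA₀card ▸ Cardinal.mk_le_of_injective hginj
    exact absurd this (not_le.mpr (hsize q))
end

section
/- Let P be a directed partially ordered set with calibre (κ⁺, κ), and let {C_p : p ∈ P} be a P-ordered collection of families of sets, each of which is additively <κ-Noetherian. Then the union ⋃_{p∈P} C_p is additively ≤κ-Noetherian (i.e., additively <κ⁺-Noetherian). -/
/-!
A `⊂`-well-ordered chain of unions of length `κ⁺` yields, at each successor step, a member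
`V α` of `⋃ p, C p` and a point `x α ∈ V α` lying in no earlier `V β`. Each `V α` belongs to
some `C (g α)`; by the calibre, or by pigeonhole (`κ⁺` is regular) when fewer than `κ⁺` values
`g α` occur, `κ` of the indices are bounded by a single `q`. Monotonicity puts those `V α` in
`C q`, where the partial unions `⋃ β ≤ α, V β` form a strictly increasing chain of length `κ`.
-/

universe u

open Cardinal Set Order

def IsLeftSeparated {ι X : Type*} [LT ι] (V : ι → Set X) (x : ι → X) : Prop :=
  ∀ a, x a ∈ V a ∧ ∀ b < a, x a ∉ V b

theorem IsLeftSeparated.comp {ι β X : Type*} [Preorder ι] [Preorder β] {V : ι → Set X}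
    {x : ι → X} (hV : IsLeftSeparated V x) {f : β → ι} (hf : StrictMono f) :
    IsLeftSeparated (V ∘ f) (x ∘ f) :=
  fun a => ⟨(hV (f a)).1, fun b hba => (hV (f a)).2 (f b) (hf hba)⟩

section

variable {X ι : Type u} {C : Set (Set X)} {κ : Cardinal.{u}}

theorem IsLtNoetherian.card_lt_of_strictMono [LinearOrder ι] [WellFoundedLT ι]
    (hC : IsLtNoetherian C κ) {f : ι → Set X} (hf : StrictMono f) (hfC : ∀ a, f a ∈ C) :
    #ι < κ := by
  have : IsWellOrder (range f) (fun A B => (A : Set X) ⊂ B) :=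
    hf.orderIso.symm.toRelIsoLT.toRelEmbedding.isWellOrder
  simpa only [mk_range_eq f hf.injective] using hC _ (range_subset_iff.2 hfC) this

theorem exists_strictMono_of_not_isLtNoetherian (h : ¬IsLtNoetherian C κ) :
    ∃ f : κ.ord.ToType → Set X, StrictMono f ∧ ∀ a, f a ∈ C := by
  simp only [IsLtNoetherian, not_forall, not_lt] at h
  obtain ⟨D, hDC, hD, hκD⟩ := h
  have hle : Ordinal.type (α := κ.ord.ToType) (· < ·) ≤
      Ordinal.type (fun A B : D => (A : Set X) ⊂ B) := by
    rw [Ordinal.type_toType, ord_le, Ordinal.card_type]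
    exact hκD
  obtain ⟨e⟩ := Ordinal.type_le_iff'.1 hle
  exact ⟨fun a => e a, fun a b hab => e.map_rel_iff.2 hab, fun a => hDC (e a).2⟩

theorem IsAddLtNoetherian.card_lt_of_isLeftSeparated [LinearOrder ι] [WellFoundedLT ι]
    (hC : IsAddLtNoetherian C κ) {V : ι → Set X} {x : ι → X} (hVC : ∀ a, V a ∈ C)
    (hV : IsLeftSeparated V x) : #ι < κ := by
  refine IsLtNoetherian.card_lt_of_strictMono hC (f := fun a => ⋃₀ (V '' Iic a)) ?_ ?_
  · intro a b hab
    refine ssubset_of_subset_not_subset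
      (sUnion_subset_sUnion (image_mono (Iic_subset_Iic.2 hab.le))) fun hsub => ?_
    obtain ⟨_, ⟨c, hca, rfl⟩, hxc⟩ :=
      hsub (mem_sUnion_of_mem (hV b).1 (mem_image_of_mem V le_rfl))
    exact (hV b).2 c (hca.trans_lt hab) hxc
  · exact fun a => ⟨V '' Iic a, image_subset_iff.2 fun b _ => hVC b, rfl⟩

theorem exists_isLeftSeparated_of_strictMono [PartialOrder ι] [SuccOrder ι] [NoMaxOrder ι]
    {f : ι → Set X} (hf : StrictMono f) (hfC : ∀ a, ∃ S ⊆ C, f a = ⋃₀ S) :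
    ∃ (V : ι → Set X) (x : ι → X), (∀ a, V a ∈ C) ∧ IsLeftSeparated V x := by
  have step : ∀ a, ∃ V ∈ C, ∃ x ∈ V, V ⊆ f (succ a) ∧ x ∉ f a := by
    intro a
    obtain ⟨x, hx, hxa⟩ := exists_of_ssubset (hf (lt_succ a))
    obtain ⟨S, hSC, hS⟩ := hfC (succ a)
    rw [hS] at hx
    obtain ⟨V, hVS, hxV⟩ := hx
    exact ⟨V, hSC hVS, x, hxV, hS ▸ subset_sUnion_of_mem hVS, hxa⟩
  choose V hVC x hxV hVf hxf using step
  refine ⟨V, x, hVC, fun a => ⟨hxV a, fun b hba hxb => hxf a ?_⟩⟩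
  exact hf.monotone (succ_le_of_lt hba) (hVf b hxb)

end

theorem exists_bddAbove_image_of_calibre {ι P : Type u} [Preorder P] {κ : Cardinal.{u}}
    (hκ : ℵ₀ ≤ κ)
    (hcal : ∀ A : Set P, #A = succ κ → ∃ A₀ ⊆ A, #A₀ = κ ∧ BddAbove A₀)
    (g : ι → P) (hι : succ κ ≤ #ι) : ∃ I : Set ι, κ ≤ #I ∧ BddAbove (g '' I) := by
  by_cases hrange : succ κ ≤ #(range g)
  · obtain ⟨A, hAg, hA⟩ := le_mk_iff_exists_subset.1 hrange
    obtain ⟨A₀, hA₀A, hA₀, hbdd⟩ := hcal A hA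
    exact ⟨g ⁻¹' A₀, hA₀ ▸ mk_preimage_of_subset_range g A₀ (hA₀A.trans hAg),
      hbdd.mono (image_preimage_subset g A₀)⟩
  · rw [not_le, ← (isRegular_succ hκ).cof_ord] at hrange
    obtain ⟨a, ha⟩ := infinite_pigeonhole_card (rangeFactorization g) (succ κ) hι
      (hκ.trans (le_succ κ)) hrange
    refine ⟨_, (le_succ κ).trans ha, ⟨a, ?_⟩⟩
    rintro _ ⟨t, ht, rfl⟩
    exact (congrArg Subtype.val ht).le

theorem stmt5_general {P : Type u} [PartialOrder P] {X : Type u}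
    (κ : Cardinal.{u}) (hκ : Cardinal.aleph0 ≤ κ)
    (hcal : ∀ A : Set P, Cardinal.mk A = Order.succ κ →
      ∃ A₀ ⊆ A, Cardinal.mk A₀ = κ ∧ BddAbove A₀)
    (C : P → Set (Set X)) (hmono : Monotone C)
    (hnoeth : ∀ p, IsAddLtNoetherian (C p) κ) :
    IsAddLtNoetherian (⋃ p, C p) (Order.succ κ) := by
  by_contra h
  obtain ⟨f, hf, hfC⟩ := exists_strictMono_of_not_isLtNoetherian h
  have := Cardinal.noMaxOrder (hκ.trans (le_succ κ))
  obtain ⟨V, x, hVC, hV⟩ := exists_isLeftSeparated_of_strictMono hf hfC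
  choose g hg using fun a => mem_iUnion.1 (hVC a)
  obtain ⟨I, hI, q, hq⟩ := exists_bddAbove_image_of_calibre hκ hcal g
    (by rw [mk_toType, card_ord])
  refine hI.not_gt ((hnoeth q).card_lt_of_isLeftSeparated (fun a => ?_)
    (hV.comp (f := ((↑) : I → _)) fun _ _ => id))
  exact hmono (hq ⟨a, a.2, rfl⟩) (hg a)

theorem stmt5 {P : Type u} [PartialOrder P] [IsDirected P (· ≤ ·)] {X : Type u}
    (κ : Cardinal.{u}) (hκ : Cardinal.aleph0 ≤ κ)
    (hcal : ∀ A : Set P, Cardinal.mk A = Order.succ κ →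
      ∃ A₀ ⊆ A, Cardinal.mk A₀ = κ ∧ BddAbove A₀)
    (C : P → Set (Set X)) (hmono : Monotone C)
    (hnoeth : ∀ p, IsAddLtNoetherian (C p) κ) :
    IsAddLtNoetherian (⋃ p, C p) (Order.succ κ) :=
  stmt5_general κ hκ hcal C hmono hnoeth
end

section
/- Let P be a directed set with a first-countable topology in which every convergent sequence has an upper bound. Let {C_p : p ∈ P} be a P-ordered collection (p ≤ q implies C_p ⊆ C_q) of finite families of subsets of a set X. Then for every p ∈ P there exists an open neighborhood T of p such that ⋃{C_q : q ∈ T} is finite. -/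
theorem stmt7 {P : Type*} [PartialOrder P] [IsDirected P (· ≤ ·)]
    [TopologicalSpace P] [FirstCountableTopology P] {X : Type*}
    (hseq : ∀ (u : ℕ → P) (p : P), Filter.Tendsto u Filter.atTop (nhds p) →
      BddAbove (Set.range u))
    (C : P → Set (Set X)) (hmono : Monotone C) (hfin : ∀ p, (C p).Finite) :
    ∀ p : P, ∃ T : Set P, IsOpen T ∧ p ∈ T ∧ (⋃ q ∈ T, C q).Finite := by
  classical
  intro p
  by_contra h
  push_neg at h
  obtain ⟨s, hs⟩ := (nhds p).exists_antitone_basis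
  have hTn : ∀ n : ℕ, ∃ T : Set P, IsOpen T ∧ p ∈ T ∧ T ⊆ s n := by
    intro n
    rcases mem_nhds_iff.mp (hs.mem n) with ⟨T, hTs, hTo, hpT⟩
    exact ⟨T, hTo, hpT, hTs⟩
  choose T hTo hpT hTs using hTn
  have hinf : ∀ n, (⋃ q ∈ T n, C q).Infinite := fun n => h (T n) (hTo n) (hpT n)
  have key : ∀ (F : Finset (Set X)) (n : ℕ), ∃ qS : P × Set X,
      qS.1 ∈ T n ∧ qS.2 ∈ C qS.1 ∧ qS.2 ∉ F := by
    intro F n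
    obtain ⟨S, hS⟩ := ((hinf n).diff F.finite_toSet).nonempty
    obtain ⟨hS1, hS2⟩ := hS
    simp only [Set.mem_iUnion] at hS1
    obtain ⟨q, hq, hSq⟩ := hS1
    exact ⟨(q, S), hq, hSq, hS2⟩
  choose f hf1 hf2 hf3 using key
  set F : ℕ → Finset (Set X) :=
    fun n => Nat.rec ∅ (fun k Fk => insert (f Fk k).2 Fk) n with hF
  set q : ℕ → P := fun n => (f (F n) n).1 with hq
  set S : ℕ → Set X := fun n => (f (F n) n).2 with hSdef
  have hFsucc : ∀ n, F (n + 1) = insert (S n) (F n) := fun n => rfl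
  have hFmono : ∀ m n : ℕ, m ≤ n → F m ⊆ F n := by
    intro m n hmn
    induction n with
    | zero => simp_all
    | succ k ih =>
      rcases Nat.lt_or_ge m (k + 1) with hlt | hge
      · exact (ih (Nat.lt_succ_iff.mp hlt)).trans (by rw [hFsucc]; exact Finset.subset_insert _ _)
      · have : m = k + 1 := le_antisymm hmn hge
        subst this; rfl
  have hSinj : Function.Injective S := by
    intro m n hmn
    by_contra hne
    wlog hlt : m < n generalizing m n
    · exact this hmn.symm (Ne.symm hne) (lt_of_le_of_ne (not_lt.mp hlt) (Ne.symm hne))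
    have h1 : S m ∈ F n := hFmono (m + 1) n hlt (by rw [hFsucc]; exact Finset.mem_insert_self _ _)
    have h2 : S n ∉ F n := hf3 (F n) n
    rw [hmn] at h1
    exact h2 h1
  have htend : Filter.Tendsto q Filter.atTop (nhds p) :=
    hs.tendsto fun n => hTs n (hf1 (F n) n)
  obtain ⟨r, hr⟩ := hseq q p htend
  have hSr : ∀ n, S n ∈ C r := fun n =>
    hmono (hr (Set.mem_range_self n)) (hf2 (F n) n)
  exact (Set.infinite_of_injective_forall_mem hSinj hSr) (hfin r)
end

section
/- A directed set P does not have calibre (ω₁, ω) if and only if there is a Tukey quotient from P onto [ω₁]^{<ω}, the set of finite subsets of ω₁ ordered by inclusion. -/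
/-!
If `A ⊆ P` is uncountable and its bounded subsets are finite, embed `ω₁` into `A` by `f`; then
`p ↦ {α | f α ≤ p}` takes finite values, is monotone, and is cofinal because `P` is directed.
Conversely, given a Tukey quotient `φ`, pick `g α` with `α ∈ φ (g α)`: `g` has finite fibres, so its
range is uncountable, and a bound `q` of a subset of the range confines it to the finite `g '' φ q`.
-/

universe u

open Cardinal Function

section Tukey

variable {P : Type*} [Preorder P]

theorem finite_setOf_le_of_forall_infinite_not_bddAbove {A : Set P}
    (hA : ∀ B ⊆ A, B.Infinite → ¬BddAbove B) {ι : Type*} {f : ι → P} (hf : Injective f)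
    (hfA : ∀ i, f i ∈ A) (p : P) : {i | f i ≤ p}.Finite := by
  by_contra hinf
  refine hA (f '' {i | f i ≤ p}) (Set.image_subset_iff.2 fun i _ ↦ hfA i)
    (Set.Infinite.image hf.injOn hinf) ⟨p, ?_⟩
  rintro _ ⟨i, hi, rfl⟩
  exact hi

theorem exists_monotone_cofinal_finset_of_finite_setOf_le [IsDirected P (· ≤ ·)] [Nonempty P]
    {ι : Type*} (f : ι → P) (hf : ∀ p, {i | f i ≤ p}.Finite) :
    ∃ φ : P → Finset ι, Monotone φ ∧ ∀ F : Finset ι, ∃ p, F ⊆ φ p := by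
  classical
  refine ⟨fun p ↦ (hf p).toFinset, fun p q hpq i hi ↦ ?_, fun F ↦ ?_⟩
  · simp only [Set.Finite.mem_toFinset, Set.mem_ofPred_eq] at hi ⊢
    exact hi.trans hpq
  · obtain ⟨p, hp⟩ := (F.image f).exists_le
    refine ⟨p, fun i hi ↦ ?_⟩
    simpa using hp _ (Finset.mem_image_of_mem f hi)

theorem exists_not_countable_forall_bddAbove_finite {X : Type*} [Uncountable X]
    {φ : P → Finset X} (hφ : Monotone φ) (hcof : ∀ F : Finset X, ∃ p, F ⊆ φ p) :
    ∃ A : Set P, ¬A.Countable ∧ ∀ B ⊆ A, BddAbove B → B.Finite := by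
  choose g hg using fun x : X ↦ hcof {x}
  have hmem (x : X) : x ∈ φ (g x) := hg x (Finset.mem_singleton_self x)
  refine ⟨Set.range g, fun hc ↦ ?_, ?_⟩
  · have : Countable (Set.range g) := hc.to_subtype
    have : Countable X := Set.Countable.of_preimage_singleton fun p : Set.range g ↦
      ((φ p).finite_toSet.subset fun x (hx : Set.rangeFactorization g x = p) ↦
        congrArg Subtype.val hx ▸ hmem x).countable
    exact not_countable this
  · rintro B hB ⟨q, hq⟩
    refine ((φ q).finite_toSet.image g).subset fun b hb ↦ ?_
    obtain ⟨x, rfl⟩ := hB hb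
    exact ⟨x, hφ (hq hb) (hmem x), rfl⟩

end Tukey

instance uncountable_aleph_one_ord_toType : Uncountable (aleph.{u} 1).ord.ToType := by
  rw [← aleph0_lt_mk_iff, mk_toType, card_ord]
  exact aleph0_lt_aleph_one

theorem stmt11 {P : Type u} [PartialOrder P] [IsDirected P (· ≤ ·)] :
    (¬ ∀ A : Set P, ¬ A.Countable → ∃ B ⊆ A, B.Infinite ∧ BddAbove B) ↔
      ∃ φ : P → Finset (Cardinal.aleph.{u} 1).ord.ToType,
        Monotone φ ∧ ∀ F : Finset (Cardinal.aleph.{u} 1).ord.ToType, ∃ p, F ⊆ φ p := by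
  constructor
  · intro h
    push Not at h
    obtain ⟨A, hA, hB⟩ := h
    have : Uncountable A := not_countable_iff.1 hA
    have : #(aleph.{u} 1).ord.ToType ≤ #A := by
      rw [mk_toType, card_ord, aleph_one_le_iff]
      exact aleph0_lt_mk (α := A)
    obtain ⟨f⟩ := this
    have : Nonempty P := ⟨f (Classical.arbitrary _)⟩
    exact exists_monotone_cofinal_finset_of_finite_setOf_le _
      (finite_setOf_le_of_forall_infinite_not_bddAbove hB
        (Subtype.val_injective.comp f.injective) fun i ↦ (f i).2)
  · rintro ⟨φ, hφ, hcof⟩ h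
    obtain ⟨A, hA, hfin⟩ := exists_not_countable_forall_bddAbove_finite hφ hcof
    obtain ⟨B, hBA, hBinf, hBbdd⟩ := h A hA
    exact hBinf (hfin B hBA hBbdd)
end

section
/- Let f : X → Y be a closed continuous surjection of topological spaces whose fibers are <κ-compact (every open cover of a fiber has a subcover of size < κ), let P be a <κ-directed set (every subset of P of size < κ has an upper bound), and let Q be a property of families of subsets preserved by images under continuous maps. If X has a P-Q point network, then Y has a P-Q point network. -/
universe u

theorem stmt14 {X Y : Type u} [TopologicalSpace X] [TopologicalSpace Y]
    {P : Type u} [Preorder P] [IsDirected P (· ≤ ·)]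
    (κ : Cardinal.{u}) (hκ : Cardinal.aleph0 ≤ κ)
    (f : X → Y) (hfc : Continuous f) (hfcl : IsClosedMap f)
    (hfs : Function.Surjective f)
    (hfib : ∀ y : Y, ∀ 𝒰 : Set (Set X), (∀ U ∈ 𝒰, IsOpen U) → f ⁻¹' {y} ⊆ ⋃₀ 𝒰 →
      ∃ 𝒰₀ ⊆ 𝒰, Cardinal.mk 𝒰₀ < κ ∧ f ⁻¹' {y} ⊆ ⋃₀ 𝒰₀)
    (hdir : ∀ S : Set P, Cardinal.mk S < κ → BddAbove S)
    (Q : ∀ (Z : Type u) [TopologicalSpace Z], Set (Set Z) → Prop)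
    (hQ : ∀ (Z Z' : Type u) [TopologicalSpace Z] [TopologicalSpace Z'] (g : Z → Z'),
      Continuous g → ∀ 𝒞 : Set (Set Z), Q Z 𝒞 → Q Z' ((fun S => g '' S) '' 𝒞))
    (W : P → X → Set (Set X))
    (hmono : ∀ x : X, Monotone fun p => W p x)
    (hmem : ∀ (p : P) (x : X), ∀ S ∈ W p x, x ∈ S)
    (hQW : ∀ (p : P) (x : X), Q X (W p x))
    (hnet : ∀ (x : X) (U : Set X), IsOpen U → x ∈ U →
      ∃ (V : Set X) (p : P), IsOpen V ∧ x ∈ V ∧ V ⊆ U ∧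
        ∀ y ∈ V, ∃ S ∈ W p y, x ∈ S ∧ S ⊆ U) :
    ∃ W' : P → Y → Set (Set Y),
      (∀ y : Y, Monotone fun p => W' p y) ∧
      (∀ (p : P) (y : Y), ∀ S ∈ W' p y, y ∈ S) ∧
      (∀ (p : P) (y : Y), Q Y (W' p y)) ∧
      (∀ (y : Y) (U : Set Y), IsOpen U → y ∈ U →
        ∃ (V : Set Y) (p : P), IsOpen V ∧ y ∈ V ∧ V ⊆ U ∧
          ∀ z ∈ V, ∃ S ∈ W' p z, y ∈ S ∧ S ⊆ U) := by
  choose s hs using hfs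
  refine ⟨fun p y => (fun S => f '' S) '' (W p (s y)), ?_, ?_, ?_, ?_⟩
  · intro y p q hpq
    exact Set.image_mono (hmono (s y) hpq)
  · rintro p y S ⟨T, hT, rfl⟩
    exact ⟨s y, hmem p (s y) T hT, hs y⟩
  · intro p y
    exact hQ X Y f hfc (W p (s y)) (hQW p (s y))
  · intro y U hU hyU
    set 𝒰 : Set (Set X) := {V | IsOpen V ∧ ∃ p : P, ∀ w ∈ V,
      ∃ S ∈ W p w, (∃ x ∈ S, f x = y) ∧ S ⊆ f ⁻¹' U} with h𝒰def
    have hcov : f ⁻¹' {y} ⊆ ⋃₀ 𝒰 := by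
      intro x hx
      have hxy : f x = y := hx
      have hxU : x ∈ f ⁻¹' U := by simp [Set.mem_preimage, hxy, hyU]
      obtain ⟨V, p, hVo, hxV, hVU, hVnet⟩ := hnet x (f ⁻¹' U) (hU.preimage hfc) hxU
      refine ⟨V, ⟨hVo, p, fun w hw => ?_⟩, hxV⟩
      obtain ⟨S, hS, hxS, hSU⟩ := hVnet w hw
      exact ⟨S, hS, ⟨x, hxS, hxy⟩, hSU⟩
    obtain ⟨𝒰₀, h𝒰₀, hcard, hcov₀⟩ := hfib y 𝒰 (fun V hV => hV.1) hcov
    have hchoice : ∀ V : 𝒰₀, ∃ p : P, ∀ w ∈ (V : Set X),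
        ∃ S ∈ W p w, (∃ x ∈ S, f x = y) ∧ S ⊆ f ⁻¹' U :=
      fun V => (h𝒰₀ V.2).2
    choose pV hpV using hchoice
    obtain ⟨p', hp'⟩ := hdir (Set.range pV) (lt_of_le_of_lt Cardinal.mk_range_le hcard)
    set G := ⋃₀ 𝒰₀ with hGdef
    have hGopen : IsOpen G := isOpen_sUnion (fun V hV => (h𝒰₀ hV).1)
    have key : ∀ z : Y, z ∈ (f '' Gᶜ)ᶜ →
        ∃ S ∈ W p' (s z), (∃ x ∈ S, f x = y) ∧ S ⊆ f ⁻¹' U := by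
      intro z hz
      have hsz : s z ∈ G := by
        by_contra h
        exact hz ⟨s z, h, hs z⟩
      obtain ⟨V, hV, hszV⟩ := hsz
      obtain ⟨S, hS, hxS, hSU⟩ := hpV ⟨V, hV⟩ (s z) hszV
      exact ⟨S, hmono (s z) (hp' ⟨⟨V, hV⟩, rfl⟩) hS, hxS, hSU⟩
    refine ⟨(f '' Gᶜ)ᶜ, p', isOpen_compl_iff.mpr (hfcl _ hGopen.isClosed_compl), ?_, ?_, ?_⟩
    · rintro ⟨w, hw, hfw⟩
      exact hw (hcov₀ hfw)
    · intro z hz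
      obtain ⟨S, hS, _, hSU⟩ := key z hz
      have := hSU (hmem p' (s z) S hS)
      simpa [Set.mem_preimage, hs z] using this
    · intro z hz
      obtain ⟨S, hS, ⟨x, hxS, hfx⟩, hSU⟩ := key z hz
      exact ⟨f '' S, ⟨S, hS, rfl⟩, ⟨x, hxS, hfx⟩, Set.image_subset_iff.mpr hSU⟩
end

section
/- Let X be a topological space and N a collection of pairs (N, V) with N ⊆ V ⊆ X and V open, written as a P-ordered union N = ⋃_p N_p with N_p ⊆ N_{p'} for p ≤ p', such that every point x in an open set U admits some p and some (N, V) ∈ N_p with x ∈ N ⊆ U. Define W_p(x) = {{x} ∪ N : (N, V) ∈ N_p, x ∈ V}. Then W(x) = ⋃_p W_p(x) is a P-ordered strong point network for X: whenever x ∈ U open, there are open V' with x ∈ V' ⊆ U and p ∈ P such that every y ∈ V' admits W ∈ W_p(y) with x ∈ W ⊆ V'. Moreover, if each N_p is point-<κ (each point of X lies in the second coordinate V of fewer than κ pairs of N_p), then each W_p(x) has size < κ. -/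
universe u

theorem stmt15 {X : Type u} [TopologicalSpace X] {P : Type*} [Preorder P]
    [IsDirected P (· ≤ ·)] (κ : Cardinal.{u}) (hκ : Cardinal.aleph0 ≤ κ)
    (N : P → Set (Set X × Set X)) (hmono : Monotone N)
    (hpair : ∀ (p : P), ∀ n ∈ N p, n.1 ⊆ n.2 ∧ IsOpen n.2)
    (hnet : ∀ (x : X) (U : Set X), IsOpen U → x ∈ U →
      ∃ (p : P), ∃ n ∈ N p, x ∈ n.1 ∧ n.1 ⊆ U) :
    (∀ (x : X) (U : Set X), IsOpen U → x ∈ U →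
      ∃ (V : Set X) (p : P), IsOpen V ∧ x ∈ V ∧ V ⊆ U ∧
        ∀ y ∈ V, ∃ W ∈ {S : Set X | ∃ n ∈ N p, y ∈ n.2 ∧ S = {y} ∪ n.1},
          x ∈ W ∧ W ⊆ V) ∧
    (∀ p : P, (∀ x : X, Cardinal.mk {n ∈ N p | x ∈ n.2} < κ) →
      ∀ x : X, Cardinal.mk {S : Set X | ∃ n ∈ N p, x ∈ n.2 ∧ S = {x} ∪ n.1} < κ) := by
  constructor
  · intro x U hU hxU
    obtain ⟨p, n, hn, hxn, hnU⟩ := hnet x U hU hxU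
    obtain ⟨hsub, hopen⟩ := hpair p n hn
    refine ⟨n.2 ∩ U, p, hopen.inter hU, ⟨hsub hxn, hxU⟩, Set.inter_subset_right, ?_⟩
    intro y hy
    refine ⟨{y} ∪ n.1, ⟨n, hn, hy.1, rfl⟩, Or.inr hxn, ?_⟩
    rintro z (rfl | hz)
    · exact hy
    · exact ⟨hsub hz, hnU hz⟩
  · intro p h x
    have himg : {S : Set X | ∃ n ∈ N p, x ∈ n.2 ∧ S = {x} ∪ n.1}
        = (fun n : Set X × Set X => {x} ∪ n.1) '' {n ∈ N p | x ∈ n.2} := by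
      ext S
      constructor
      · rintro ⟨n, hn, hx, rfl⟩; exact ⟨n, ⟨hn, hx⟩, rfl⟩
      · rintro ⟨n, ⟨hn, hx⟩, rfl⟩; exact ⟨n, hn, hx, rfl⟩
    rw [himg]
    exact lt_of_le_of_lt (Cardinal.mk_image_le) (h x)
end

section
/- The Cantor cube X = {0,1}^{ω₁} has no countable point network: there is no assignment x ↦ W(x) of countable families of subsets of X containing x such that for every x in an open set U there is an open V with x ∈ V ⊆ U such that every y ∈ V admits W ∈ W(y) with x ∈ W ⊆ U. -/
open Topology
universe u

/-- The `<ω₁`-box style topology on `{0,1}^{ω₁}` generated by the sets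
`B_α(x) = {y : y γ = x γ for all γ < α}`. -/
noncomputable def cubeTop :
    TopologicalSpace ((Cardinal.aleph.{u} 1).ord.ToType → Bool) :=
  TopologicalSpace.generateFrom
    {S | ∃ (x : (Cardinal.aleph.{u} 1).ord.ToType → Bool)
          (α : (Cardinal.aleph.{u} 1).ord.ToType),
        S = {y | ∀ γ < α, y γ = x γ}}

/-!
A point network provides, for each point `x` and width `α`, a width `Γ x α` such that every
`y ∈ B_{Γ x α}(x)` has some `W ∈ 𝒲 y` with `x ∈ W ⊆ B_α(x)`. Recursively choose an increasing
sequence `γ_i` (`i < ω₁`) and widths `α_i` with `γ_j < α_i ≤ γ_i` for `j < i` and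
`Γ x_i α_i ≤ γ_i`, where `x_i` is the indicator of `{γ_j | j < i}`. The indicator `y` of all the
`γ_i` agrees with `x_i` below `γ_i`, so some `W_i ∈ 𝒲 y` satisfies `x_i ∈ W_i ⊆ B_{α_i}(x_i)`.
For `i < j` the points `x_i` and `x_j` differ at `γ_i < α_j`, hence `x_i ∉ W_j`: the `W_i` are
pairwise distinct and `𝒲 y` is uncountable.
-/

open Cardinal Set

section TransfiniteSeq

variable {ι α : Type*} [Preorder ι] [WellFoundedLT ι]

noncomputable def transfiniteSeq (next : Set α → α) : ι → α :=
  WellFoundedLT.fix fun i g => next {a | ∃ j, ∃ h : j < i, g j h = a}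

theorem transfiniteSeq_eq (next : Set α → α) (i : ι) :
    transfiniteSeq next i = next (transfiniteSeq next '' Iio i) := by
  rw [transfiniteSeq, WellFoundedLT.fix_eq]
  congr 1
  ext a
  simp

end TransfiniteSeq

namespace CantorCube

abbrev Omega1 : Type u := (aleph.{u} 1).ord.ToType

instance : Uncountable Omega1.{u} :=
  aleph0_lt_mk_iff.1 (by simp)

theorem countable_Iio (i : Omega1.{u}) : (Iio i).Countable :=
  le_aleph0_iff_set_countable.1 (lt_aleph_one_iff.1 (by simpa using mk_Iio_lt i))

theorem exists_gt_of_countable {s : Set Omega1.{u}} (hs : s.Countable) : ∃ b, ∀ a ∈ s, a < b := by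
  refine not_isCofinal_iff.1 fun hcof => (Order.cof_le hcof).not_gt ?_
  rw [Ordinal.cof_toType, isRegular_aleph_one.cof_ord]
  exact lt_aleph_one_iff.2 (le_aleph0_iff_set_countable.2 hs)

noncomputable def strictUpperBound (s : Set Omega1.{u}) : Omega1.{u} :=
  Classical.epsilon fun b => ∀ a ∈ s, a < b

theorem lt_strictUpperBound {s : Set Omega1.{u}} (hs : s.Countable) {a : Omega1.{u}}
    (ha : a ∈ s) : a < strictUpperBound s :=
  Classical.epsilon_spec (exists_gt_of_countable hs) a ha

open scoped Classical in
noncomputable def boolIndicator (s : Set Omega1.{u}) : Omega1.{u} → Bool :=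
  fun a => decide (a ∈ s)

def box (x : Omega1.{u} → Bool) (α : Omega1.{u}) : Set (Omega1.{u} → Bool) :=
  {y | ∀ γ < α, y γ = x γ}

theorem box_anti (x : Omega1.{u} → Bool) : Antitone (box x) :=
  fun _ _ hαβ _ hy γ hγ => hy γ (hγ.trans_le hαβ)

theorem boolIndicator_mem_box_iff {s t : Set Omega1.{u}} {α : Omega1.{u}} :
    boolIndicator s ∈ box (boolIndicator t) α ↔ ∀ γ < α, (γ ∈ s ↔ γ ∈ t) := by
  simp only [box, boolIndicator, mem_ofPred_eq, decide_eq_decide]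

theorem isOpen_box (x : Omega1.{u} → Bool) (α : Omega1.{u}) : IsOpen[cubeTop] (box x α) :=
  TopologicalSpace.GenerateOpen.basic _ ⟨x, α, rfl⟩

theorem exists_box_subset_of_isOpen {U : Set (Omega1.{u} → Bool)} (hU : IsOpen[cubeTop] U) :
    ∀ x ∈ U, ∃ α, box x α ⊆ U := by
  induction hU with
  | basic S hS =>
    obtain ⟨z, α, rfl⟩ := hS
    exact fun x hx => ⟨α, fun y hy γ hγ => (hy γ hγ).trans (hx γ hγ)⟩
  | univ => exact fun _ _ => ⟨Classical.arbitrary _, subset_univ _⟩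
  | inter _ _ _ _ ihS ihT =>
    rintro x ⟨hxS, hxT⟩
    obtain ⟨α, hα⟩ := ihS x hxS
    obtain ⟨β, hβ⟩ := ihT x hxT
    exact ⟨max α β, subset_inter (box_anti x le_sup_left |>.trans hα)
      (box_anti x le_sup_right |>.trans hβ)⟩
  | sUnion _ _ ih =>
    rintro x ⟨T, hT, hxT⟩
    obtain ⟨α, hα⟩ := ih T hT x hxT
    exact ⟨α, hα.trans (subset_sUnion_of_mem hT)⟩

section Diagonal

variable (Γ : (Omega1.{u} → Bool) → Omega1.{u} → Omega1.{u})

noncomputable def nextCoord (s : Set Omega1.{u}) : Omega1.{u} :=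
  max (Γ (boolIndicator s) (strictUpperBound s)) (strictUpperBound s)

noncomputable def coord : Omega1.{u} → Omega1.{u} := transfiniteSeq (nextCoord Γ)

noncomputable def width (i : Omega1.{u}) : Omega1.{u} := strictUpperBound (coord Γ '' Iio i)

noncomputable def stagePoint (i : Omega1.{u}) : Omega1.{u} → Bool :=
  boolIndicator (coord Γ '' Iio i)

theorem coord_lt_width {i j : Omega1.{u}} (hij : i < j) : coord Γ i < width Γ j :=
  lt_strictUpperBound ((countable_Iio j).image _) (mem_image_of_mem _ hij)

theorem width_le_coord (i : Omega1.{u}) : width Γ i ≤ coord Γ i := by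
  rw [coord, transfiniteSeq_eq]
  exact le_max_right _ _

theorem apply_stagePoint_width_le_coord (i : Omega1.{u}) :
    Γ (stagePoint Γ i) (width Γ i) ≤ coord Γ i := by
  rw [coord, transfiniteSeq_eq]
  exact le_max_left _ _

theorem strictMono_coord : StrictMono (coord Γ) :=
  fun _ j hij => (coord_lt_width Γ hij).trans_le (width_le_coord Γ j)

theorem boolIndicator_range_mem_box (i : Omega1.{u}) :
    boolIndicator (range (coord Γ)) ∈ box (stagePoint Γ i) (coord Γ i) := by
  refine boolIndicator_mem_box_iff.2 fun γ hγ => ⟨?_, fun h => image_subset_range _ _ h⟩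
  rintro ⟨j, rfl⟩
  exact mem_image_of_mem _ ((strictMono_coord Γ).lt_iff_lt.1 hγ)

theorem stagePoint_notMem_box {i j : Omega1.{u}} (hij : i < j) :
    stagePoint Γ i ∉ box (stagePoint Γ j) (width Γ j) := by
  rw [stagePoint, stagePoint, boolIndicator_mem_box_iff]
  intro h
  have hi : coord Γ i ∉ coord Γ '' Iio i := fun ⟨_, hk, hki⟩ => (strictMono_coord Γ hk).ne hki
  exact hi ((h _ (coord_lt_width Γ hij)).2 (mem_image_of_mem _ hij))

theorem exists_diagonal_sequence : ∃ (y : Omega1.{u} → Bool) (x : Omega1.{u} → Omega1.{u} → Bool)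
    (α : Omega1.{u} → Omega1.{u}),
    (∀ i, y ∈ box (x i) (Γ (x i) (α i))) ∧ ∀ ⦃i j⦄, i < j → x i ∉ box (x j) (α j) :=
  ⟨_, stagePoint Γ, width Γ,
    fun i => box_anti _ (apply_stagePoint_width_le_coord Γ i)
      (boolIndicator_range_mem_box Γ i),
    fun _ _ => stagePoint_notMem_box Γ⟩

end Diagonal

end CantorCube

open CantorCube

/-- The Cantor cube `{0,1}^{ω₁}` (with the topology generated by the sets
`B_α(x)`) has no countable point network. -/
theorem stmt16 :
    ¬ ∃ 𝒲 : ((Cardinal.aleph.{u} 1).ord.ToType → Bool) →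
        Set (Set ((Cardinal.aleph.{u} 1).ord.ToType → Bool)),
      (∀ x, (𝒲 x).Countable) ∧ (∀ x, ∀ S ∈ 𝒲 x, x ∈ S) ∧
      (∀ x U, IsOpen[cubeTop] U → x ∈ U →
        ∃ V, IsOpen[cubeTop] V ∧ x ∈ V ∧ V ⊆ U ∧
          ∀ y ∈ V, ∃ W ∈ 𝒲 y, x ∈ W ∧ W ⊆ U) := by
  rintro ⟨𝒲, h𝒲_countable, -, h𝒲⟩
  have hwidth : ∀ x α, ∃ β, ∀ y ∈ box x β, ∃ W ∈ 𝒲 y, x ∈ W ∧ W ⊆ box x α := by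
    intro x α
    obtain ⟨V, hV, hxV, -, hV𝒲⟩ := h𝒲 x _ (isOpen_box x α) fun _ _ => rfl
    obtain ⟨β, hβ⟩ := exists_box_subset_of_isOpen hV x hxV
    exact ⟨β, fun y hy => hV𝒲 y (hβ hy)⟩
  choose Γ hΓ using hwidth
  obtain ⟨y, x, α, hy, hx⟩ := exists_diagonal_sequence Γ
  choose W hW𝒲 hxW hW using fun i => hΓ (x i) (α i) y (hy i)
  have hW_inj : Function.Injective W :=
    .of_lt_imp_ne fun i j hij hWij => hx hij (hW j (hWij ▸ hxW i))
  exact not_countable_univ <|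
    (mapsTo_univ_iff.2 hW𝒲).countable_of_injOn hW_inj.injOn (h𝒲_countable y)
end

section
/- Let M be a separable metrizable space and K(M) its set of compact subsets directed by inclusion. Then K(M) has calibre (ω₁, ω): every uncountable family of compact subsets of M contains an infinite subfamily whose union has compact closure contained in some compact subset of M (i.e., has an upper bound in K(M)). -/
open TopologicalSpace Set Filter Metric EMetric Topology

/-- In a second-countable space, a set all of whose points are isolated in it
is countable. -/
lemma aux_countable_of_isolated {X : Type*} [TopologicalSpace X]
    [SecondCountableTopology X] {S : Set X}
    (h : ∀ x ∈ S, x ∉ closure (S \ {x})) : S.Countable := by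
  obtain ⟨B, hBc, -, hB⟩ := TopologicalSpace.exists_countable_basis X
  have key : ∀ x ∈ S, ∃ U ∈ B, x ∈ U ∧ U ∩ S ⊆ {x} := by
    intro x hx
    have hxo : x ∈ (closure (S \ {x}))ᶜ := h x hx
    obtain ⟨U, hUB, hxU, hUsub⟩ :=
      hB.exists_subset_of_mem_open hxo (isClosed_closure.isOpen_compl)
    refine ⟨U, hUB, hxU, ?_⟩
    intro y ⟨hyU, hyS⟩
    by_contra hy
    exact hUsub hyU (subset_closure ⟨hyS, hy⟩)
  choose! f hfB hxf hsub using key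
  have hinj : S.InjOn f := by
    intro x hx y hy hxy
    have : x ∈ f y ∩ S := ⟨hxy ▸ hxf x hx, hx⟩
    exact hsub y hy this
  exact countable_of_injective_of_countable_image hinj
    (hBc.mono (image_subset_iff.2 fun x hx => hfB x hx))

/-- For a separable metrizable space `M`, the directed set `K(M)` of compact
subsets of `M` ordered by inclusion has calibre `(ω₁, ω)`: every uncountable
family of compact subsets contains an infinite subfamily with an upper bound
in `K(M)`. -/
theorem stmt18 {M : Type*} [TopologicalSpace M]
    [TopologicalSpace.SeparableSpace M] [TopologicalSpace.MetrizableSpace M] :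
    ∀ A : Set (Set M), (∀ K ∈ A, IsCompact K) → ¬ A.Countable →
      ∃ B ⊆ A, B.Infinite ∧ ∃ K : Set M, IsCompact K ∧ ∀ C ∈ B, C ⊆ K := by
  intro A hA hAunc
  letI : MetricSpace M := TopologicalSpace.metrizableSpaceMetric M
  haveI : SecondCountableTopology M := UniformSpace.secondCountable_of_separable M
  set S : Set (NonemptyCompacts M) := {K | (K : Set M) ∈ A} with hS
  have hSunc : ¬ S.Countable := by
    intro hSc
    apply hAunc
    have hsub : A ⊆ insert ∅ ((fun K : NonemptyCompacts M => (K : Set M)) '' S) := by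
      intro C hC
      rcases eq_or_ne C ∅ with rfl | hne
      · exact mem_insert _ _
      · exact mem_insert_of_mem _
          ⟨⟨⟨C, hA C hC⟩, Set.nonempty_iff_ne_empty.2 hne⟩, hC, rfl⟩
    exact ((hSc.image _).insert _).mono hsub
  have hacc : ∃ K₀ ∈ S, K₀ ∈ closure (S \ {K₀}) := by
    by_contra h
    push_neg at h
    exact hSunc (aux_countable_of_isolated h)
  obtain ⟨K₀, hK₀S, hK₀⟩ := hacc
  obtain ⟨u, hu_mem, hu_tends⟩ := mem_closure_iff_seq_limit.1 hK₀
  have hrange : (Set.range u).Infinite := by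
    by_contra hfin
    rw [Set.not_infinite] at hfin
    haveI : Finite (Set.range u) := hfin
    obtain ⟨a, ha⟩ := Finite.exists_infinite_fiber
      (fun n : ℕ => (⟨u n, mem_range_self n⟩ : Set.range u))
    have hfreq : ∃ᶠ n in atTop, u n ∈ ({(a : NonemptyCompacts M)} : Set _) := by
      rw [Nat.frequently_atTop_iff_infinite]
      refine (Set.infinite_coe_iff.1 ha).mono fun n hn => ?_
      simpa using congrArg Subtype.val hn
    have : K₀ ∈ closure ({(a : NonemptyCompacts M)} : Set _) :=
      mem_closure_iff_frequently.2 (hu_tends.frequently hfreq)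
    rw [closure_singleton, mem_singleton_iff] at this
    obtain ⟨n, hn⟩ := hfreq.exists
    exact (hu_mem n).2 (hn.trans this.symm)
  refine ⟨(fun K : NonemptyCompacts M => (K : Set M)) '' Set.range u, ?_,
    hrange.image (fun x _ y _ h => SetLike.coe_injective h),
    (K₀ : Set M) ∪ ⋃ n, (u n : Set M), ?_, ?_⟩
  · rintro C ⟨K, ⟨n, rfl⟩, rfl⟩
    exact (hu_mem n).1
  · -- compactness of the union
    classical
    apply isCompact_of_finite_subcover
    intro ι U hUo hcov
    obtain ⟨t₀, ht₀⟩ := K₀.isCompact.elim_finite_subcover U hUo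
      (subset_union_left.trans hcov)
    have hVopen : IsOpen (⋃ i ∈ t₀, U i) := isOpen_biUnion fun i _ => hUo i
    obtain ⟨δ, δpos, hδ⟩ := K₀.isCompact.exists_thickening_subset_open hVopen ht₀
    obtain ⟨N, hN⟩ := (EMetric.tendsto_atTop.1 hu_tends (ENNReal.ofReal δ)
      (by simpa using ENNReal.ofReal_pos.2 δpos))
    have hsubN : ∀ n, N ≤ n → (u n : Set M) ⊆ ⋃ i ∈ t₀, U i := by
      intro n hn x hx
      apply hδ
      rw [mem_thickening_iff_infEdist_lt]
      calc EMetric.infEdist x (K₀ : Set M)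
          ≤ EMetric.hausdorffEdist ((u n : Set M)) (K₀ : Set M) :=
            EMetric.infEdist_le_hausdorffEdist_of_mem hx
        _ < ENNReal.ofReal δ := hN n hn
    choose t ht using fun n : ℕ => (u n).isCompact.elim_finite_subcover U hUo
      (((subset_iUnion (fun m => ((u m : Set M))) n).trans subset_union_right).trans hcov)
    refine ⟨t₀ ∪ (Finset.range N).biUnion t, ?_⟩
    rintro x (hx | hx)
    · exact Set.biUnion_subset_biUnion_left
        (fun i hi => Finset.mem_union_left _ hi) (ht₀ hx)
    · obtain ⟨_, ⟨n, rfl⟩, hx⟩ := hx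
      rcases le_or_gt N n with hn | hn
      · exact Set.biUnion_subset_biUnion_left
          (fun i hi => Finset.mem_union_left _ hi) (hsubN n hn hx)
      · refine Set.biUnion_subset_biUnion_left
          (fun i hi => Finset.mem_union_right _ ?_) (ht n hx)
        exact Finset.mem_biUnion.2 ⟨n, Finset.mem_range.2 hn, hi⟩
  · rintro C ⟨K, ⟨n, rfl⟩, rfl⟩
    exact (subset_iUnion (fun m => ((u m : Set M))) n).trans subset_union_right
end

section
/- Suppose W = {W(x) : x ∈ X} is a Z-finite point network for a space X, where Z is a space admitting a P-ordered compact cover Z = ⋃_{p∈P} K_p (K_p compact, K_p ⊆ K_q for p ≤ q). Then X has a P-finite point network, obtained by setting Ŵ_p(x) = ⋃{W_z(x) : z ∈ K_p}. -/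
theorem stmt19 {X Z : Type*} [TopologicalSpace X] [TopologicalSpace Z]
    {P : Type*} [Preorder P] [IsDirected P (· ≤ ·)]
    (K : P → Set Z) (hKmono : Monotone K) (hKcpt : ∀ p, IsCompact (K p))
    (hKcov : ⋃ p, K p = Set.univ)
    (W : Z → X → Set (Set X))
    (hmem : ∀ (z : Z) (x : X), ∀ S ∈ W z x, x ∈ S)
    (hnet : ∀ (x : X) (U : Set X), IsOpen U → x ∈ U →
      ∃ (V : Set X) (z : Z), IsOpen V ∧ x ∈ V ∧ V ⊆ U ∧
        ∀ y ∈ V, ∃ S ∈ W z y, x ∈ S ∧ S ⊆ U)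
    (hfin : ∀ (x : X) (z : Z), ∃ T : Set Z, IsOpen T ∧ z ∈ T ∧
      (⋃ z' ∈ T, W z' x).Finite) :
    (∀ (p : P) (x : X), (⋃ z ∈ K p, W z x).Finite) ∧
    (∀ (x : X) (U : Set X), IsOpen U → x ∈ U →
      ∃ (V : Set X) (p : P), IsOpen V ∧ x ∈ V ∧ V ⊆ U ∧
        ∀ y ∈ V, ∃ S ∈ ⋃ z ∈ K p, W z y, x ∈ S ∧ S ⊆ U) := by
  constructor
  · intro p x
    choose T hTopen hTmem hTfin using hfin x
    obtain ⟨t, ht⟩ := (hKcpt p).elim_finite_subcover T hTopen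
      (fun z hz => Set.mem_iUnion.2 ⟨z, hTmem z⟩)
    have : (⋃ z ∈ K p, W z x) ⊆ ⋃ z ∈ t, ⋃ z' ∈ T z, W z' x := by
      intro S hS
      obtain ⟨z, hz, hSz⟩ := Set.mem_iUnion₂.1 hS
      obtain ⟨z0, hz0t, hz0⟩ := Set.mem_iUnion₂.1 (ht hz)
      exact Set.mem_iUnion₂.2 ⟨z0, hz0t, Set.mem_iUnion₂.2 ⟨z, hz0, hSz⟩⟩
    exact Set.Finite.subset (t.finite_toSet.biUnion fun z _ => hTfin z) this
  · intro x U hU hxU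
    obtain ⟨V, z, hVopen, hxV, hVU, hV⟩ := hnet x U hU hxU
    have : z ∈ ⋃ p, K p := hKcov ▸ Set.mem_univ z
    obtain ⟨p, hp⟩ := Set.mem_iUnion.1 this
    refine ⟨V, p, hVopen, hxV, hVU, fun y hy => ?_⟩
    obtain ⟨S, hS, hxS, hSU⟩ := hV y hy
    exact ⟨S, Set.mem_iUnion₂.2 ⟨z, hp, hS⟩, hxS, hSU⟩
end
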